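/- arXiv:2309.01167 — 3 statements merged into one kernel-verified Lean document; each statement's English description precedes it below -/
import Mathlib

section
/- Let d ≥ 1 and let U be distributed according to the normalized Haar probability measure on the group U(d) of d×d complex unitary matrices. For any natural numbers k ≠ k' and any index families i, j : Fin k → Fin d and i', j' : Fin k' → Fin d, the expectation E[ ∏_{ℓ=1}^{k} u(i_ℓ, j_ℓ) · ∏_{ℓ=1}^{k'} conj(u(i'_ℓ, j'_ℓ)) ] equals 0, where u(a,b) denotes the (a,b) entry of U. -/
open MeasureTheory Matrix

noncomputable instance {d : ℕ} : MeasurableSpace (Matrix.unitaryGroup (Fin d) ℂ) := borel _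
instance {d : ℕ} : BorelSpace (Matrix.unitaryGroup (Fin d) ℂ) := ⟨rfl⟩

/-!
Multiplying `U` by a scalar `z` of modulus one is a left translation of `U(d)`, so it preserves
the Haar measure, while it multiplies the monomial by `z ^ k * conj z ^ k' = z ^ (k - k')`.
Choosing `z` with `z ^ (k - k') ≠ 1` forces the integral to vanish.
-/

open ComplexConjugate

theorem MeasureTheory.integral_eq_zero_of_mul_left_eq_mul {G 𝕜 : Type*} [Group G]
    [MeasurableSpace G] [MeasurableMul G] [RCLike 𝕜] (μ : Measure G) [μ.IsMulLeftInvariant]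
    {f : G → 𝕜} (g : G) {a : 𝕜} (ha : a ≠ 1) (hf : ∀ x, f (g * x) = a * f x) :
    ∫ x, f x ∂μ = 0 := by
  have h : ∫ x, f x ∂μ = a * ∫ x, f x ∂μ := by
    rw [← integral_const_mul, ← integral_mul_left_eq_self f g]
    simp only [hf]
  have h' : (a - 1) * ∫ x, f x ∂μ = 0 := by linear_combination -h
  exact (mul_eq_zero.1 h').resolve_left (sub_ne_zero.2 ha)

namespace Circle

theorem coe_mem_unitary (z : Circle) : (z : ℂ) ∈ unitary ℂ := by
  rw [Unitary.mem_iff, Complex.star_def, ← coe_inv_eq_conj, ← coe_mul, ← coe_mul,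
    inv_mul_cancel, mul_inv_cancel, coe_one]
  exact ⟨rfl, rfl⟩

theorem coe_pow_mul_conj_pow (z : Circle) (k k' : ℕ) :
    (z : ℂ) ^ k * conj (z : ℂ) ^ k' = ↑(z ^ ((k : ℤ) - k')) := by
  rw [← coe_inv_eq_conj, ← coe_pow, ← coe_pow, ← coe_mul, _root_.zpow_sub, zpow_natCast,
    zpow_natCast, inv_pow]

theorem exists_zpow_ne_one {m : ℤ} (hm : m ≠ 0) : ∃ z : Circle, z ^ m ≠ 1 :=
  ⟨exp (Real.pi / m), by
    rw [← exp_intCast_mul, mul_div_cancel₀ _ (Int.cast_ne_zero.2 hm)]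
    exact exp_pi_ne_one⟩

end Circle

namespace Matrix

variable {m n ι ι' : Type*} [Fintype ι] [Fintype ι']

def entryMonomial (i : ι → m) (j : ι → n) (i' : ι' → m) (j' : ι' → n) (M : Matrix m n ℂ) : ℂ :=
  (∏ ℓ, M (i ℓ) (j ℓ)) * ∏ ℓ, conj (M (i' ℓ) (j' ℓ))

theorem entryMonomial_smul (i : ι → m) (j : ι → n) (i' : ι' → m) (j' : ι' → n) (z : ℂ)
    (M : Matrix m n ℂ) :
    entryMonomial i j i' j' (z • M) =
      z ^ Fintype.card ι * conj z ^ Fintype.card ι' * entryMonomial i j i' j' M := by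
  simp only [entryMonomial, smul_apply, smul_eq_mul, map_mul, Finset.prod_mul_distrib,
    Finset.prod_const, Finset.card_univ]
  ring

variable [Fintype n] [DecidableEq n]

def circleScalar (z : Circle) : unitaryGroup n ℂ :=
  ⟨(z : ℂ) • 1, Unitary.smul_mem_of_mem z.coe_mem_unitary (one_mem _)⟩

theorem coe_circleScalar_mul (z : Circle) (U : unitaryGroup n ℂ) :
    ((circleScalar z * U : unitaryGroup n ℂ) : Matrix n n ℂ) = (z : ℂ) • (U : Matrix n n ℂ) :=
  smul_one_mul _ _

end Matrix

theorem unitary_haar_unbalanced_moment_eq_zero_general {d : ℕ}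
    (μ : Measure (Matrix.unitaryGroup (Fin d) ℂ)) [μ.IsHaarMeasure]
    {k k' : ℕ} (hkk' : k ≠ k') (i j : Fin k → Fin d) (i' j' : Fin k' → Fin d) :
    ∫ U : Matrix.unitaryGroup (Fin d) ℂ,
        (∏ ℓ, (U : Matrix (Fin d) (Fin d) ℂ) (i ℓ) (j ℓ)) *
        (∏ ℓ, (starRingEnd ℂ) ((U : Matrix (Fin d) (Fin d) ℂ) (i' ℓ) (j' ℓ))) ∂μ = 0 := by
  obtain ⟨z, hz⟩ := Circle.exists_zpow_ne_one (sub_ne_zero.2 (Nat.cast_injective.ne hkk'))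
  refine integral_eq_zero_of_mul_left_eq_mul (f := fun U => entryMonomial i j i' j' U) μ
    (circleScalar z) (a := ((z ^ ((k : ℤ) - k') : Circle) : ℂ)) (Circle.coe_eq_one.not.2 hz)
    fun U => ?_
  rw [coe_circleScalar_mul, entryMonomial_smul, Fintype.card_fin, Fintype.card_fin,
    Circle.coe_pow_mul_conj_pow]

/-- For the normalized Haar probability measure on the unitary group `U(d)`, the expectation of a
monomial with `k` factors `u(iₗ, jₗ)` and `k'` factors `conj(u(i'ₗ, j'ₗ))` vanishes when `k ≠ k'`. -/
theorem unitary_haar_unbalanced_moment_eq_zero {d : ℕ} (hd : 1 ≤ d)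
    (μ : Measure (Matrix.unitaryGroup (Fin d) ℂ)) [μ.IsHaarMeasure] [IsProbabilityMeasure μ]
    {k k' : ℕ} (hkk' : k ≠ k') (i j : Fin k → Fin d) (i' j' : Fin k' → Fin d) :
    ∫ U : Matrix.unitaryGroup (Fin d) ℂ,
        (∏ ℓ, (U : Matrix (Fin d) (Fin d) ℂ) (i ℓ) (j ℓ)) *
        (∏ ℓ, (starRingEnd ℂ) ((U : Matrix (Fin d) (Fin d) ℂ) (i' ℓ) (j' ℓ))) ∂μ = 0 :=
  unitary_haar_unbalanced_moment_eq_zero_general μ hkk' i j i' j'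
end

section
/- Let V be a standard real Gaussian vector in ℝ^d, i.e. the entries V(j), j ∈ Fin d, are i.i.d. real Gaussian with mean 0 and variance 1. Then for every k and every index family i : Fin (2k) → Fin d, E[ ∏_{ℓ=1}^{2k} v(i_ℓ) ] = ∑_{σ} ∏_{x=1}^{2k} δ(i_x, i_{σ(x)}), where the sum runs over all fixed-point-free involutions σ of {1,…,2k} (i.e. permutations with σ∘σ = id and σ(x) ≠ x for all x). Moreover, for every odd n and every i : Fin n → Fin d, E[ ∏_{ℓ=1}^{n} v(i_ℓ) ] = 0. -/
/-!
Integrating coordinate by coordinate, the moment factors over the colors `j` of `i` into the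
one-dimensional moments `E[X ^ m j]`, where `m j` is the number of `ℓ` with `i ℓ = j`. Gaussian
integration by parts gives `E[X ^ (m + 2)] = (m + 1) E[X ^ m]`, so `E[X ^ m]` is the number of
pairings of an `m`-element set. On the other side, the pairings whose pairs have equal colors
are counted by fixing a point `a`: its partner `b` is one of the other points of its color, and
what remains is such a pairing of the points other than `a` and `b`. This is the same recursion,
color by color.
-/

open MeasureTheory ProbabilityTheory

noncomputable def realGaussianVec (d : ℕ) : Measure (Fin d → ℝ) :=
  Measure.pi fun _ => gaussianReal 0 1

def fpfInvolutions (n : ℕ) : Finset (Equiv.Perm (Fin n)) :=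
  Finset.univ.filter fun σ => σ * σ = 1 ∧ ∀ x, σ x ≠ x

open Real Finset Equiv Equiv.Perm

/-- `(n - 1)‼` for even `n` and `0` for odd `n`: the number of pairings of an `n`-element set. -/
def numPairings : ℕ → ℕ
  | 0 => 1
  | 1 => 0
  | n + 2 => (n + 1) * numPairings n

lemma numPairings_eq_pred_mul {m : ℕ} (hm : m ≠ 0) :
    numPairings m = (m - 1) * numPairings (m - 2) := by
  match m, hm with
  | 1, _ => rfl
  | n + 2, _ => simp [numPairings]

lemma numPairings_of_odd {n : ℕ} (hn : Odd n) : numPairings n = 0 := by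
  induction n using numPairings.induct with
  | case1 => simp at hn
  | case2 => rfl
  | case3 n ih => rw [numPairings, ih (by simpa [parity_simps] using hn), mul_zero]

section Pairings

variable {α β : Type*}

lemma apply_swap_apply_of_eq [DecidableEq α] {i : α → β} {a b : α} (hab : i a = i b)
    (x : α) :
    i (swap a b x) = i x := by
  rw [swap_apply_def]
  split_ifs <;> simp_all

lemma commute_swap_of_swap_apply_eq [DecidableEq α] {σ : Perm α} {a b : α}
    (h : swap (σ a) (σ b) = swap a b) : Commute (swap a b) σ := by
  show swap a b * σ = σ * swap a b
  rw [mul_swap_eq_swap_mul, h]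

lemma prod_numPairings_sdiff_pair [DecidableEq α] [DecidableEq β] [Fintype β] {i : α → β}
    {s : Finset α} {a b : α} (ha : a ∈ s) (hb : b ∈ s) (hab : a ≠ b)
    (hi : i b = i a) :
    ∏ j, numPairings #{x ∈ s \ {a, b} | i x = j} =
      numPairings (#{x ∈ s | i x = i a} - 2) *
        ∏ j ∈ univ.erase (i a), numPairings #{x ∈ s | i x = j} := by
  have hsdiff (j : β) : {x ∈ s \ {a, b} | i x = j} = {x ∈ s | i x = j} \ {a, b} := by
    ext x; simp only [mem_filter, mem_sdiff]; tauto
  rw [← mul_prod_erase _ _ (mem_univ (i a))]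
  congr 1
  · rw [hsdiff, card_sdiff_of_subset (by simp [insert_subset_iff, ha, hb, hi]), card_pair hab]
  · refine prod_congr rfl fun j hj => ?_
    have hja : j ≠ i a := ne_of_mem_erase hj
    rw [hsdiff, sdiff_eq_self_of_disjoint]
    simp only [disjoint_left, mem_filter, mem_insert, mem_singleton, not_or]
    rintro x ⟨-, rfl⟩
    constructor <;> rintro rfl
    exacts [hja rfl, hja hi]

variable [Fintype α] [DecidableEq α] [DecidableEq β]

lemma mem_support_swap_mul_iff {σ : Perm α} {a b x : α} (hxa : x ≠ a) (hxb : x ≠ b) :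
    x ∈ (swap a b * σ).support ↔ x ∈ σ.support := by
  simp [mem_support, swap_apply_eq_iff, swap_apply_of_ne_of_ne hxa hxb]

/-- The pairings of `s` into pairs of equal color under `i`, as involutions with support `s`. -/
def colorPairings (i : α → β) (s : Finset α) : Finset (Perm α) :=
  {σ | σ * σ = 1 ∧ σ.support = s ∧ ∀ x, i (σ x) = i x}

variable {i : α → β} {s : Finset α} {a b : α}

lemma mem_colorPairings {σ : Perm α} :
    σ ∈ colorPairings i s ↔ σ * σ = 1 ∧ σ.support = s ∧ ∀ x, i (σ x) = i x := by
  simp [colorPairings]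

lemma colorPairings_empty (i : α → β) : colorPairings i ∅ = {1} := by
  ext σ
  simp only [mem_colorPairings, support_eq_empty_iff, mem_singleton]
  exact ⟨fun h => h.2.1, by rintro rfl; simp⟩

lemma swap_mul_mem_colorPairings_sdiff (hi : i a = i b) {σ : Perm α}
    (hσ : σ ∈ colorPairings i s) (hσa : σ a = b) :
    swap a b * σ ∈ colorPairings i (s \ {a, b}) := by
  obtain ⟨hinv, hsupp, hcol⟩ := mem_colorPairings.mp hσ
  have hσb : σ b = a := by rw [← hσa, ← mul_apply, hinv, one_apply]
  have hcomm : Commute (swap a b) σ :=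
    commute_swap_of_swap_apply_eq (by rw [hσa, hσb, swap_comm])
  refine mem_colorPairings.mpr ⟨?_, ?_, fun x => ?_⟩
  · rw [hcomm.symm.mul_mul_mul_comm, swap_mul_self, hinv, one_mul]
  · ext x
    by_cases hxa : x = a
    · rw [hxa]; simp [mem_support, hσa]
    by_cases hxb : x = b
    · rw [hxb]; simp [mem_support, hσb]
    simp [mem_support_swap_mul_iff hxa hxb, hsupp, hxa, hxb]
  · rw [mul_apply, apply_swap_apply_of_eq hi, hcol]

lemma swap_mul_mem_colorPairings (ha : a ∈ s) (hb : b ∈ s) (hab : a ≠ b) (hi : i a = i b)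
    {τ : Perm α} (hτ : τ ∈ colorPairings i (s \ {a, b})) :
    swap a b * τ ∈ colorPairings i s ∧ (swap a b * τ) a = b := by
  obtain ⟨hinv, hsupp, hcol⟩ := mem_colorPairings.mp hτ
  have hτa : τ a = a := notMem_support.mp (by simp [hsupp])
  have hτb : τ b = b := notMem_support.mp (by simp [hsupp])
  have hcomm : Commute (swap a b) τ := commute_swap_of_swap_apply_eq (by rw [hτa, hτb])
  refine ⟨mem_colorPairings.mpr ⟨?_, ?_, fun x => ?_⟩, by simp [hτa]⟩
  · rw [hcomm.symm.mul_mul_mul_comm, swap_mul_self, hinv, one_mul]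
  · ext x
    by_cases hxa : x = a
    · rw [hxa]; simp [mem_support, hτa, hab.symm, ha]
    by_cases hxb : x = b
    · rw [hxb]; simp [mem_support, hτb, hab, hb]
    simp [mem_support_swap_mul_iff hxa hxb, hsupp, hxa, hxb]
  · rw [mul_apply, apply_swap_apply_of_eq hi, hcol]

lemma card_filter_colorPairings_apply_eq (ha : a ∈ s) (hb : b ∈ s) (hab : a ≠ b)
    (hi : i a = i b) :
    #{σ ∈ colorPairings i s | σ a = b} = #(colorPairings i (s \ {a, b})) := by
  refine card_nbij' (swap a b * ·) (swap a b * ·) (fun σ hσ => ?_) (fun τ hτ => ?_)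
    (fun σ _ => swap_mul_self_mul a b σ) (fun τ _ => swap_mul_self_mul a b τ)
  · obtain ⟨hσ, hσa⟩ := mem_filter.mp hσ
    exact swap_mul_mem_colorPairings_sdiff hi hσ hσa
  · exact mem_filter.mpr (swap_mul_mem_colorPairings ha hb hab hi hτ)

theorem card_colorPairings [Fintype β] (i : α → β) (s : Finset α) :
    #(colorPairings i s) = ∏ j, numPairings #{x ∈ s | i x = j} := by
  induction s using Finset.strongInduction with
  | H s ih =>
  rcases s.eq_empty_or_nonempty with rfl | ⟨a, ha⟩
  · simp [colorPairings_empty, numPairings]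
  set m := #{x ∈ s | i x = i a}
  set partners : Finset α := {b ∈ s.erase a | i b = i a}
  have hpartners : #partners = m - 1 := by
    rw [show partners = {x ∈ s | i x = i a}.erase a by ext; simp [partners]; tauto]
    exact card_erase_of_mem (by simp [ha])
  have hfiber :
      #(colorPairings i s) = ∑ b ∈ partners, #{σ ∈ colorPairings i s | σ a = b} := by
    refine card_eq_sum_card_fiberwise fun σ hσ => ?_
    obtain ⟨-, hsupp, hcol⟩ := mem_colorPairings.mp hσ
    have haσ : a ∈ σ.support := hsupp ▸ ha
    simp only [partners, coe_filter, mem_erase]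
    exact ⟨⟨mem_support.mp haσ, hsupp ▸ apply_mem_support.mpr haσ⟩, hcol a⟩
  have hterm (b : α) (hb : b ∈ partners) : #{σ ∈ colorPairings i s | σ a = b} =
      numPairings (m - 2) * ∏ j ∈ univ.erase (i a), numPairings #{x ∈ s | i x = j} := by
    obtain ⟨⟨hba, hbs⟩, hbc⟩ := by simpa [partners] using hb
    rw [card_filter_colorPairings_apply_eq ha hbs (Ne.symm hba) hbc.symm,
      ih _ (sdiff_ssubset (by simp [insert_subset_iff, ha, hbs]) (by simp)),
      prod_numPairings_sdiff_pair ha hbs (Ne.symm hba) hbc]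
  have hm : m ≠ 0 := (card_pos.mpr ⟨a, by simp [ha]⟩).ne'
  rw [hfiber, sum_congr rfl hterm, sum_const, hpartners, smul_eq_mul, ← mul_assoc,
    ← numPairings_eq_pred_mul hm, mul_prod_erase _ (fun j => numPairings #{x ∈ s | i x = j})
      (mem_univ (i a))]

lemma sum_fpfInvolutions_prod_ite {R : Type*} [CommSemiring R] {n : ℕ} (i : Fin n → β) :
    ∑ σ ∈ fpfInvolutions n, ∏ x, (if i x = i (σ x) then (1 : R) else 0) =
      #(colorPairings i univ) := by
  simp only [prod_boole, mem_univ, true_imp_iff, sum_boole]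
  congr 2
  ext σ
  simp only [fpfInvolutions, mem_filter, mem_univ, true_and, mem_colorPairings,
    eq_univ_iff_forall, mem_support, and_assoc]
  exact and_congr_right' (and_congr_right' (forall_congr' fun x => eq_comm))

end Pairings

lemma card_fpfInvolutions (n : ℕ) : #(fpfInvolutions n) = numPairings n := by
  simpa [card_colorPairings] using sum_fpfInvolutions_prod_ite (R := ℕ) (fun _ : Fin n => ())

lemma fpfInvolutions_eq_empty_of_odd {n : ℕ} (hn : Odd n) : fpfInvolutions n = ∅ :=
  card_eq_zero.mp ((card_fpfInvolutions n).trans (numPairings_of_odd hn))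

lemma integrable_pow_mul_exp_neg_sq_div_two (n : ℕ) :
    Integrable fun x : ℝ => x ^ n * exp (-x ^ 2 / 2) := by
  have := integrable_rpow_mul_exp_neg_mul_sq (b := 1 / 2) (by norm_num) (s := n)
    (neg_one_lt_zero.trans_le n.cast_nonneg)
  simpa [Real.rpow_natCast, neg_div, div_eq_inv_mul] using this

lemma integral_pow_add_two_mul_exp_neg_sq_div_two (n : ℕ) :
    ∫ x, x ^ (n + 2) * exp (-x ^ 2 / 2) = (n + 1) * ∫ x, x ^ n * exp (-x ^ 2 / 2) := by
  have hderiv (x : ℝ) : HasDerivAt (fun y => y ^ (n + 1) * exp (-y ^ 2 / 2))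
      ((n + 1) * (x ^ n * exp (-x ^ 2 / 2)) - x ^ (n + 2) * exp (-x ^ 2 / 2)) x := by
    refine ((hasDerivAt_pow (n + 1) x).mul
      (((hasDerivAt_pow 2 x).fun_neg.div_const 2).exp)).congr_deriv ?_
    push_cast
    ring
  have hint := ((integrable_pow_mul_exp_neg_sq_div_two n).const_mul ((n : ℝ) + 1)).sub
    (integrable_pow_mul_exp_neg_sq_div_two (n + 2))
  have hzero := integral_eq_zero_of_hasDerivAt_of_integrable hderiv hint
    (integrable_pow_mul_exp_neg_sq_div_two (n + 1))
  rw [integral_sub ((integrable_pow_mul_exp_neg_sq_div_two n).const_mul _)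
    (integrable_pow_mul_exp_neg_sq_div_two (n + 2)), integral_const_mul, sub_eq_zero] at hzero
  exact hzero.symm

lemma integral_pow_gaussianReal_eq_integral_mul_exp (n : ℕ) :
    ∫ x, x ^ n ∂gaussianReal 0 1 = (√(2 * π))⁻¹ * ∫ x, x ^ n * exp (-x ^ 2 / 2) := by
  rw [integral_gaussianReal_eq_integral_smul one_ne_zero, ← integral_const_mul]
  congr 1 with x
  simp [gaussianPDFReal]
  ring

lemma integral_pow_add_two_gaussianReal (n : ℕ) :
    ∫ x, x ^ (n + 2) ∂gaussianReal 0 1 = (n + 1) * ∫ x, x ^ n ∂gaussianReal 0 1 := by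
  rw [integral_pow_gaussianReal_eq_integral_mul_exp, integral_pow_gaussianReal_eq_integral_mul_exp,
    integral_pow_add_two_mul_exp_neg_sq_div_two]
  ring

lemma integral_pow_gaussianReal (n : ℕ) : ∫ x, x ^ n ∂gaussianReal 0 1 = numPairings n := by
  induction n using numPairings.induct with
  | case1 => simp [numPairings]
  | case2 => simp [numPairings, integral_id_gaussianReal]
  | case3 n ih => rw [integral_pow_add_two_gaussianReal, ih, numPairings]; push_cast; ring

lemma integral_prod_apply_pi {ι κ 𝕜 : Type*} [Fintype ι] [Fintype κ] [DecidableEq κ]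
    [RCLike 𝕜] {_ : MeasurableSpace 𝕜} (μ : Measure 𝕜) [SigmaFinite μ] (i : ι → κ) :
    ∫ ω, ∏ ℓ, ω (i ℓ) ∂Measure.pi (fun _ => μ) =
      ∏ j, ∫ x, x ^ #{ℓ | i ℓ = j} ∂μ := by
  have hfiber (ω : κ → 𝕜) : ∏ ℓ, ω (i ℓ) = ∏ j, ω j ^ #{ℓ | i ℓ = j} := by
    rw [← prod_fiberwise univ i]
    refine prod_congr rfl fun j _ => ?_
    rw [prod_congr rfl fun ℓ hℓ => congrArg ω (mem_filter.mp hℓ).2, prod_const]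
  simp_rw [hfiber]
  exact integral_fintype_prod_eq_prod (fun j x => x ^ #{ℓ | i ℓ = j})

/-- Wick formula for a standard real Gaussian vector: the `2k`-th moments are sums over pairings
(fixed-point-free involutions) of products of Kronecker deltas, and the odd moments vanish. -/
theorem real_gaussian_vector_moment (d : ℕ) :
    (∀ (k : ℕ) (i : Fin (2 * k) → Fin d),
      ∫ ω : Fin d → ℝ, ∏ ℓ, ω (i ℓ) ∂(realGaussianVec d)
        = ∑ σ ∈ fpfInvolutions (2 * k), ∏ x, if i x = i (σ x) then (1 : ℝ) else 0) ∧
    (∀ (n : ℕ), Odd n → ∀ i : Fin n → Fin d,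
      ∫ ω : Fin d → ℝ, ∏ ℓ, ω (i ℓ) ∂(realGaussianVec d) = 0) := by
  have wick (n : ℕ) (i : Fin n → Fin d) : ∫ ω, ∏ ℓ, ω (i ℓ) ∂(realGaussianVec d)
      = ∑ σ ∈ fpfInvolutions n, ∏ x, if i x = i (σ x) then (1 : ℝ) else 0 := by
    rw [realGaussianVec, integral_prod_apply_pi, sum_fpfInvolutions_prod_ite, card_colorPairings]
    simp [integral_pow_gaussianReal]
  refine ⟨fun k => wick (2 * k), fun n hn i => ?_⟩
  rw [wick, fpfInvolutions_eq_empty_of_odd hn, sum_empty]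
end

section
/- Let M be a d₁×d₂ standard complex Gaussian matrix, i.e. all entries m(a,b) = x(a,b) + i·y(a,b) where all x(a,b), y(a,b) are independent real Gaussians with mean 0 and variance 1/2. Then for every k and all index families i, i' : Fin k → Fin d₁ and j, j' : Fin k → Fin d₂, E[ ∏_{ℓ=1}^{k} m(i_ℓ, j_ℓ) · ∏_{ℓ=1}^{k} conj(m(i'_ℓ, j'_ℓ)) ] = ∑_{α ∈ S_k} ∏_{ℓ=1}^{k} δ(i_ℓ, i'_{α(ℓ)}) · δ(j_ℓ, j'_{α(ℓ)}). -/
open MeasureTheory ProbabilityTheory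

/-- The law of a `d₁ × d₂` standard complex Gaussian matrix: each entry consists of a real and an
imaginary part, each real Gaussian of mean `0` and variance `1/2`, all jointly independent. -/
noncomputable def complexGaussianMat (d₁ d₂ : ℕ) : Measure (Fin d₁ × Fin d₂ → ℝ × ℝ) :=
  Measure.pi fun _ => (gaussianReal 0 (1 / 2)).prod (gaussianReal 0 (1 / 2))

/-- The `(a,b)`-entry `m(a,b) = x(a,b) + i·y(a,b)` of the complex Gaussian matrix. -/
noncomputable def cmatEntry {d₁ d₂ : ℕ} (ω : Fin d₁ × Fin d₂ → ℝ × ℝ) (a : Fin d₁) (b : Fin d₂) :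
    ℂ :=
  ((ω (a, b)).1 : ℂ) + ((ω (a, b)).2 : ℂ) * Complex.I

/-!
Group the factors of the integrand by matrix entry: it becomes `∏ₚ mₚ ^ nₚ * conj mₚ ^ n'ₚ`,
where `nₚ` and `n'ₚ` count the `ℓ` with `(iₗ, jₗ) = p`, resp. `(i'ₗ, j'ₗ) = p`, so by
independence its expectation is a product of single-entry moments `E[z ^ a * conj z ^ b]`.
For a standard complex Gaussian `z` these vanish when `a ≠ b`, because the law of `z` is invariant
under the rotations `z ↦ c z`, `|c| = 1`, which multiply `z ^ a * conj z ^ b` by `c ^ (a - b)`;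
for `a = b` the moment is `E |z| ^ (2a) = a!`. On the other side, a permutation `α` with
`(i', j') ∘ α = (i, j)` is the same as a family of bijections between the fibres of `(i, j)` and
of `(i', j')` over each `p`, so there are `∏ₚ [nₚ = n'ₚ] nₚ!` of them.
-/

open Real Finset Equiv
open scoped ComplexConjugate Nat

section Combinatorics

theorem Fintype.card_equiv_eq_ite {α β : Type*} [Fintype α] [Fintype β] [DecidableEq α]
    [DecidableEq β] :
    Fintype.card (α ≃ β) = if Fintype.card α = Fintype.card β then (Fintype.card α)! else 0 := by
  split_ifs with h
  · exact Fintype.card_equiv (Fintype.equivOfCardEq h)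
  · exact Fintype.card_eq_zero_iff.2 ⟨fun e => h (Fintype.card_congr e)⟩

variable {β κ : Type*}

def permCompEqEquiv (q q' : β → κ) :
    {α : Perm β // q' ∘ α = q} ≃ ∀ p, {l // q l = p} ≃ {l // q' l = p} where
  toFun α p := α.1.subtypeEquiv fun l => by rw [← congrFun α.2 l]; rfl
  invFun e := ⟨ofFiberEquiv e, funext (ofFiberEquiv_map e)⟩
  left_inv α := by ext; rfl
  right_inv e := by
    funext p
    ext ⟨l, rfl⟩
    rfl

variable [Fintype β] [Fintype κ] [DecidableEq κ]

theorem card_perm_comp_eq [DecidableEq β] (q q' : β → κ) :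
    Fintype.card {α : Perm β // q' ∘ α = q} =
      ∏ p, if #{l | q l = p} = #{l | q' l = p} then (#{l | q l = p})! else 0 := by
  simp only [Fintype.card_congr (permCompEqEquiv q q'), Fintype.card_pi,
    Fintype.card_equiv_eq_ite, Fintype.card_subtype]

theorem sum_perm_prod_boole_eq [DecidableEq β] {R : Type*} [CommSemiring R] (q q' : β → κ) :
    ∑ α : Perm β, ∏ l, (if q l = q' (α l) then (1 : R) else 0) =
      ∏ p, if #{l | q l = p} = #{l | q' l = p} then ((#{l | q l = p})! : R) else 0 := by
  have hprod : ∀ α : Perm β, ∏ l, (if q l = q' (α l) then (1 : R) else 0) =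
      if q' ∘ α = q then 1 else 0 := fun α => by
    simp only [prod_boole, mem_univ, true_imp_iff, funext_iff, Function.comp_apply, eq_comm]
  rw [Fintype.sum_congr _ _ hprod, sum_boole, ← Fintype.card_subtype, card_perm_comp_eq,
    Nat.cast_prod]
  simp only [Nat.cast_ite, Nat.cast_zero]

theorem prod_comp_eq_prod_pow_card {M : Type*} [CommMonoid M] (f : κ → M) (g : β → κ) :
    ∏ l, f (g l) = ∏ p, f p ^ #{l | g l = p} := by
  simp only [← prod_fiberwise' univ g f, prod_const]

theorem prod_mul_prod_conj_comp (z : κ → ℂ) (g g' : β → κ) :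
    (∏ l, z (g l)) * ∏ l, conj (z (g' l)) =
      ∏ p, z p ^ #{l | g l = p} * conj (z p) ^ #{l | g' l = p} := by
  rw [prod_comp_eq_prod_pow_card z g, prod_comp_eq_prod_pow_card (fun p => conj (z p)) g',
    prod_mul_distrib]

end Combinatorics

noncomputable def stdComplexGaussian : Measure ℂ :=
  ((gaussianReal 0 (1 / 2)).prod (gaussianReal 0 (1 / 2))).map Complex.measurableEquivRealProd.symm

theorem gaussianPDFReal_zero_half (x : ℝ) : gaussianPDFReal 0 (1 / 2) x = rexp (-x ^ 2) / √π := by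
  simp only [gaussianPDFReal, sub_zero]
  push_cast
  rw [show (2 : ℝ) * π * (1 / 2) = π by ring, show (2 : ℝ) * (1 / 2) = 1 by ring, div_one,
    div_eq_inv_mul]

theorem gaussianReal_prod_eq_withDensity :
    (gaussianReal 0 (1 / 2)).prod (gaussianReal 0 (1 / 2)) =
      volume.withDensity fun p : ℝ × ℝ => ENNReal.ofReal (rexp (-(p.1 ^ 2 + p.2 ^ 2)) / π) := by
  rw [gaussianReal_of_var_ne_zero _ (by norm_num),
    prod_withDensity (measurable_gaussianPDF _ _) (measurable_gaussianPDF _ _),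
    ← Measure.volume_eq_prod]
  congr 1
  funext p
  rw [gaussianPDF, gaussianPDF, ← ENNReal.ofReal_mul (gaussianPDFReal_nonneg _ _ _),
    gaussianPDFReal_zero_half, gaussianPDFReal_zero_half, div_mul_div_comm,
    mul_self_sqrt pi_pos.le, ← exp_add, neg_add]

theorem integral_stdComplexGaussian {E : Type*} [NormedAddCommGroup E] [NormedSpace ℝ E]
    (g : ℂ → E) :
    ∫ z, g z ∂stdComplexGaussian = ∫ z, (rexp (-‖z‖ ^ 2) / π) • g z := by
  rw [stdComplexGaussian, integral_map_equiv, gaussianReal_prod_eq_withDensity,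
    integral_withDensity_eq_integral_toReal_smul (by fun_prop)
      (Filter.Eventually.of_forall fun _ => ENNReal.ofReal_lt_top),
    ← Complex.volume_preserving_equiv_real_prod.symm.integral_comp'
      (fun z => (rexp (-‖z‖ ^ 2) / π) • g z)]
  congr 1
  funext p
  rw [ENNReal.toReal_ofReal (by positivity), ← Complex.normSq_eq_norm_sq]
  simp [Complex.normSq_apply, sq]

theorem integral_radial_smul_pow_mul_conj_pow_of_ne (w : ℝ → ℝ) {a b : ℕ} (hab : a ≠ b) :
    ∫ z : ℂ, w ‖z‖ • (z ^ a * conj z ^ b) = 0 := by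
  set c := Circle.exp (π / ((a : ℝ) - b))
  have hc : (c : ℂ) ^ a * conj (c : ℂ) ^ b = -1 := by
    have hne : (a : ℂ) - b ≠ 0 := sub_ne_zero.2 (Nat.cast_injective.ne hab)
    rw [Circle.coe_exp, ← Complex.exp_conj, ← Complex.exp_nat_mul, ← Complex.exp_nat_mul,
      ← Complex.exp_add, map_mul, Complex.conj_ofReal, Complex.conj_I, ← Complex.exp_pi_mul_I]
    congr 1
    push_cast
    field_simp
    ring
  have hrot : ∀ z : ℂ, (c : ℂ) ^ a * z ^ a * (conj (c : ℂ) ^ b * conj z ^ b)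
      = -(z ^ a * conj z ^ b) := fun z => by linear_combination (z ^ a * conj z ^ b) * hc
  have key := (rotation c).measurePreserving.integral_comp
    (rotation c).toHomeomorph.measurableEmbedding fun z : ℂ => w ‖z‖ • (z ^ a * conj z ^ b)
  simp only [rotation_apply, norm_mul, Circle.norm_coe, one_mul, mul_pow, map_mul, hrot, smul_neg,
    integral_neg] at key
  exact self_eq_neg.mp key.symm

theorem integral_exp_neg_norm_sq_smul_pow_mul_conj_pow_self (a : ℕ) :
    ∫ z : ℂ, (rexp (-‖z‖ ^ 2) / π) • (z ^ a * conj z ^ a) = a ! := by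
  have h : ∀ z : ℂ, (rexp (-‖z‖ ^ 2) / π) • (z ^ a * conj z ^ a)
      = ((‖z‖ ^ (2 * a : ℝ) * rexp (-‖z‖ ^ (2 : ℝ)) / π : ℝ) : ℂ) := fun z => by
    have hpow : ‖z‖ ^ (2 * a : ℝ) = (‖z‖ ^ 2) ^ a := by
      rw [Real.rpow_mul (norm_nonneg z)]
      norm_cast
    rw [hpow, Real.rpow_two, ← mul_pow, Complex.mul_conj, Complex.normSq_eq_norm_sq,
      Complex.real_smul]
    push_cast
    ring
  simp_rw [h]
  rw [integral_complex_ofReal, integral_div,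
    Complex.integral_rpow_mul_exp_neg_rpow one_le_two (by linarith [a.cast_nonneg (α := ℝ)]),
    show (2 * a + 2 : ℝ) / 2 = a + 1 by ring, Real.Gamma_nat_eq_factorial]
  field_simp
  norm_cast

theorem integral_pow_mul_conj_pow_stdComplexGaussian (a b : ℕ) :
    ∫ z, z ^ a * conj z ^ b ∂stdComplexGaussian = if a = b then (a ! : ℂ) else 0 := by
  rw [integral_stdComplexGaussian]
  split_ifs with hab
  · subst hab
    exact integral_exp_neg_norm_sq_smul_pow_mul_conj_pow_self a
  · exact integral_radial_smul_pow_mul_conj_pow_of_ne (fun r => rexp (-r ^ 2) / π) hab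

theorem cmatEntry_eq {d₁ d₂ : ℕ} (ω : Fin d₁ × Fin d₂ → ℝ × ℝ) (a : Fin d₁) (b : Fin d₂) :
    cmatEntry ω a b = Complex.measurableEquivRealProd.symm (ω (a, b)) :=
  (Complex.mk_eq_add_mul_I _ _).symm

theorem integral_prod_cmatEntry {d₁ d₂ : ℕ} (f : Fin d₁ × Fin d₂ → ℂ → ℂ) :
    ∫ ω, ∏ p, f p (cmatEntry ω p.1 p.2) ∂complexGaussianMat d₁ d₂ =
      ∏ p, ∫ z, f p z ∂stdComplexGaussian := by
  simp_rw [cmatEntry_eq, Prod.mk.eta]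
  calc _ = ∏ p, ∫ w, f p (Complex.measurableEquivRealProd.symm w)
          ∂(gaussianReal 0 (1 / 2)).prod (gaussianReal 0 (1 / 2)) :=
        integral_fintype_prod_eq_prod _
    _ = _ := by simp_rw [stdComplexGaussian, integral_map_equiv]

/-- Wick formula for a standard complex Gaussian matrix:
`E[∏ m(iₗ,jₗ) · ∏ conj(m(i'ₗ,j'ₗ))] = ∑_{α ∈ S_k} ∏ δ(iₗ, i'_{α(ℓ)}) δ(jₗ, j'_{α(ℓ)})`. -/
theorem complex_gaussian_matrix_moment {d₁ d₂ k : ℕ}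
    (i i' : Fin k → Fin d₁) (j j' : Fin k → Fin d₂) :
    ∫ ω : Fin d₁ × Fin d₂ → ℝ × ℝ,
        (∏ ℓ, cmatEntry ω (i ℓ) (j ℓ)) * (∏ ℓ, (starRingEnd ℂ) (cmatEntry ω (i' ℓ) (j' ℓ)))
        ∂(complexGaussianMat d₁ d₂)
      = ∑ α : Equiv.Perm (Fin k), ∏ ℓ,
          (if i ℓ = i' (α ℓ) then (1 : ℂ) else 0) * (if j ℓ = j' (α ℓ) then (1 : ℂ) else 0) := by
  have hδ : ∀ (α : Perm (Fin k)) ℓ,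
      (if i ℓ = i' (α ℓ) then (1 : ℂ) else 0) * (if j ℓ = j' (α ℓ) then (1 : ℂ) else 0) =
        if (i ℓ, j ℓ) = (i' (α ℓ), j' (α ℓ)) then 1 else 0 := fun _ _ => by
    simp only [ite_zero_mul_ite_zero, mul_one, Prod.mk.injEq]
  have hgroup : ∀ ω : Fin d₁ × Fin d₂ → ℝ × ℝ,
      (∏ ℓ, cmatEntry ω (i ℓ) (j ℓ)) * (∏ ℓ, conj (cmatEntry ω (i' ℓ) (j' ℓ))) =
        ∏ p : Fin d₁ × Fin d₂, cmatEntry ω p.1 p.2 ^ #{ℓ | (i ℓ, j ℓ) = p} *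
          conj (cmatEntry ω p.1 p.2) ^ #{ℓ | (i' ℓ, j' ℓ) = p} := fun ω =>
    prod_mul_prod_conj_comp (fun p : Fin d₁ × Fin d₂ => cmatEntry ω p.1 p.2)
      (fun ℓ => (i ℓ, j ℓ)) (fun ℓ => (i' ℓ, j' ℓ))
  simp_rw [hδ, hgroup, integral_prod_cmatEntry (fun p z =>
      z ^ #{ℓ | (i ℓ, j ℓ) = p} * conj z ^ #{ℓ | (i' ℓ, j' ℓ) = p}),
    integral_pow_mul_conj_pow_stdComplexGaussian]
  exact (sum_perm_prod_boole_eq (fun ℓ => (i ℓ, j ℓ)) (fun ℓ => (i' ℓ, j' ℓ))).symm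
end
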